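/- arXiv:1310.1673 — 2 statements merged into one kernel-verified Lean document; each statement's English description precedes it below -/
import Mathlib

section
/- Let B_N ⊂ ℝ² be the ball of radius N ≥ 1, let 0 ≤ ρ ≤ M₁ on B_N with ∫_{B_N} ρ dx ≥ M₂ > 0, and let v ∈ H¹(B_N). Denote by v_{B_N} and ρ_{B_N} the averages of v and ρ over B_N. Then |ρ_{B_N} v_{B_N}| ≤ 8 M₁ ‖∇v‖_{L²(B_N)} + M₁^{1/2} N^{-1} ‖ρ^{1/2} v‖_{L²(B_N)}. -/
/-!
Write `ρ_B v_B = ⨍ (ρ_B - ρ)(v - v_B) + ⨍ ρ v`. Since `0 ≤ ρ, ρ_B ≤ M₁`, the first term is at most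
`M₁ ⨍ |v - v_B|`, and by Cauchy–Schwarz the second is at most `√M₁ (⨍ ρ v²)^{1/2}`.

The L¹ Poincaré inequality `∫_B |v - v_B| ≤ 2^d diam(B) ∫_B |∇v|` on a bounded convex set `B ⊂ ℝ^d`
comes from `|v x - v y| ≤ |x - y| ∫₀¹ |∇v((1 - t) y + t x)| dt`, integrated over `B × B`: for each
`t`, one of `1 - t` and `t` is at least `1/2`, and substituting in the corresponding variable costs
a Jacobian factor of at most `2^d`. On the disc of radius `N` in `ℝ²` this gives `8N`, and
Cauchy–Schwarz together with `|B_N| = π N² ≥ N²` turns both averages into the stated `L²` norms.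
-/

open MeasureTheory ProbabilityTheory ENNReal Set Metric Module

section Probability

variable {Ω : Type*} [MeasurableSpace Ω] {μ : Measure Ω}

theorem abs_integral_mul_le_sqrt_mul_sqrt {ρ v : Ω → ℝ} (hρ : 0 ≤ᵐ[μ] ρ) (hρi : Integrable ρ μ)
    (hv : AEStronglyMeasurable v μ) (hρv : Integrable (fun x => ρ x * v x ^ 2) μ) :
    |∫ x, ρ x * v x ∂μ| ≤ √(∫ x, ρ x ∂μ) * √(∫ x, ρ x * v x ^ 2 ∂μ) := by
  have hsq : ∀ᵐ x ∂μ, √(ρ x) ^ 2 = ρ x := hρ.mono fun x hx => Real.sq_sqrt hx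
  have hρs : AEStronglyMeasurable (fun x => √(ρ x)) μ :=
    Real.continuous_sqrt.comp_aestronglyMeasurable hρi.aestronglyMeasurable
  have hf : MemLp (fun x => √(ρ x)) (ENNReal.ofReal 2) μ := by
    rw [ENNReal.ofReal_ofNat, memLp_two_iff_integrable_sq hρs]
    exact hρi.congr (hsq.mono fun x hx => hx.symm)
  have hg : MemLp (fun x => √(ρ x) * |v x|) (ENNReal.ofReal 2) μ := by
    rw [ENNReal.ofReal_ofNat, memLp_two_iff_integrable_sq
      (f := fun x => √(ρ x) * |v x|) (hρs.mul (continuous_abs.comp_aestronglyMeasurable hv))]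
    exact hρv.congr (hsq.mono fun x hx => by dsimp only; rw [mul_pow, hx, sq_abs])
  calc |∫ x, ρ x * v x ∂μ| ≤ ∫ x, |ρ x * v x| ∂μ := abs_integral_le_integral_abs
    _ = ∫ x, √(ρ x) * (√(ρ x) * |v x|) ∂μ := integral_congr_ae <| hρ.mono fun x hx => by
        dsimp only
        rw [← mul_assoc, Real.mul_self_sqrt hx, abs_mul, abs_of_nonneg hx]
    _ ≤ (∫ x, √(ρ x) ^ (2 : ℝ) ∂μ) ^ (1 / (2 : ℝ)) *
          (∫ x, (√(ρ x) * |v x|) ^ (2 : ℝ) ∂μ) ^ (1 / (2 : ℝ)) :=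
        integral_mul_le_Lp_mul_Lq_of_nonneg Real.HolderConjugate.two_two
          (ae_of_all _ fun _ => Real.sqrt_nonneg _) (ae_of_all _ fun _ => by positivity) hf hg
    _ = √(∫ x, ρ x ∂μ) * √(∫ x, ρ x * v x ^ 2 ∂μ) := by
        simp only [Real.rpow_two, ← Real.sqrt_eq_rpow]
        congr 2 <;> refine integral_congr_ae (hsq.mono fun x hx => ?_)
        · exact hx
        · dsimp only
          rw [mul_pow, hx, sq_abs]

variable [IsProbabilityMeasure μ]

theorem integral_le_sqrt_integral_sq {f : Ω → ℝ} (hf : AEStronglyMeasurable f μ)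
    (hf2 : Integrable (fun x => f x ^ 2) μ) : ∫ x, f x ∂μ ≤ √(∫ x, f x ^ 2 ∂μ) := by
  simpa using (le_abs_self _).trans (abs_integral_mul_le_sqrt_mul_sqrt (ρ := fun _ => 1)
    (ae_of_all _ fun _ => zero_le_one) (integrable_const _) hf (by simpa using hf2))

theorem abs_integral_mul_integral_le {ρ v : Ω → ℝ} {M : ℝ} (hρ : ∀ᵐ x ∂μ, ρ x ∈ Icc 0 M)
    (hρm : AEStronglyMeasurable ρ μ) (hv : Integrable v μ)
    (hρv : Integrable (fun x => ρ x * v x ^ 2) μ) :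
    |(∫ x, ρ x ∂μ) * ∫ x, v x ∂μ| ≤
      M * ∫ x, |v x - ∫ y, v y ∂μ| ∂μ + √M * √(∫ x, ρ x * v x ^ 2 ∂μ) := by
  set a := ∫ x, ρ x ∂μ
  set b := ∫ x, v x ∂μ
  have hρM : ∀ᵐ x ∂μ, ‖ρ x‖ ≤ M := hρ.mono fun x hx => by
    rw [Real.norm_of_nonneg hx.1]; exact hx.2
  have hρi : Integrable ρ μ := Integrable.of_bound hρm M hρM
  have hρv₁ : Integrable (fun x => ρ x * v x) μ := hv.bdd_mul hρm hρM
  have ha : a ∈ Icc 0 M := by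
    refine ⟨integral_nonneg_of_ae (hρ.mono fun x hx => hx.1), ?_⟩
    simpa using integral_mono_ae hρi (integrable_const M) (hρ.mono fun x hx => hx.2)
  have hsplit : a * b = ∫ x, (a - ρ x) * (v x - b) ∂μ + ∫ x, ρ x * v x ∂μ := by
    have hexp : (fun x => (a - ρ x) * (v x - b)) =
        fun x => (a * v x + b * ρ x) - (ρ x * v x + a * b) := by ext x; ring
    rw [hexp, integral_sub (f := fun x => a * v x + b * ρ x) (g := fun x => ρ x * v x + a * b)
        ((hv.const_mul a).add (hρi.const_mul b)) (hρv₁.add (integrable_const _)),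
      integral_add (hv.const_mul a) (hρi.const_mul b), integral_add hρv₁ (integrable_const _),
      integral_const_mul, integral_const_mul, integral_const, probReal_univ, one_smul]
    ring
  have hcentered : |∫ x, (a - ρ x) * (v x - b) ∂μ| ≤ M * ∫ x, |v x - b| ∂μ := by
    rw [← integral_const_mul]
    refine norm_integral_le_of_norm_le (f := fun x => (a - ρ x) * (v x - b))
      (g := fun x => M * |v x - b|) ((hv.sub (integrable_const b)).abs.const_mul M)
      (hρ.mono fun x hx => ?_)
    rw [norm_mul, Real.norm_eq_abs, Real.norm_eq_abs]
    gcongr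
    exact abs_sub_le_iff.2 ⟨by linarith [ha.2, hx.1], by linarith [ha.1, hx.2]⟩
  have hweighted : |∫ x, ρ x * v x ∂μ| ≤ √M * √(∫ x, ρ x * v x ^ 2 ∂μ) :=
    (abs_integral_mul_le_sqrt_mul_sqrt (hρ.mono fun x hx => hx.1) hρi hv.1 hρv).trans
      (by gcongr; exact ha.2)
  calc |a * b| ≤ |∫ x, (a - ρ x) * (v x - b) ∂μ| + |∫ x, ρ x * v x ∂μ| := by
        rw [hsplit]; exact abs_add_le _ _
    _ ≤ _ := add_le_add hcentered hweighted

end Probability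

section SetAverage

variable {α : Type*} [MeasurableSpace α] {μ : Measure α} {s : Set α}

theorem setAverage_le_sqrt_setAverage_sq (h₀ : μ s ≠ 0) (hfin : μ s ≠ ∞) {f : α → ℝ}
    (hf : AEStronglyMeasurable f (μ.restrict s)) (hf2 : IntegrableOn (fun x => f x ^ 2) s μ) :
    ⨍ x in s, f x ∂μ ≤ √(⨍ x in s, f x ^ 2 ∂μ) := by
  have : IsProbabilityMeasure ((μ s)⁻¹ • μ.restrict s) :=
    cond_isProbabilityMeasure_of_finite h₀ hfin
  simpa only [setAverage_eq'] using integral_le_sqrt_integral_sq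
    (hf.smul_measure _) (hf2.smul_measure (ENNReal.inv_ne_top.2 h₀))

theorem abs_setAverage_mul_setAverage_le (h₀ : μ s ≠ 0) (hfin : μ s ≠ ∞) {ρ v : α → ℝ} {M : ℝ}
    (hρ : ∀ᵐ x ∂μ.restrict s, ρ x ∈ Icc 0 M) (hρm : AEStronglyMeasurable ρ (μ.restrict s))
    (hv : IntegrableOn v s μ) (hρv : IntegrableOn (fun x => ρ x * v x ^ 2) s μ) :
    |(⨍ x in s, ρ x ∂μ) * ⨍ x in s, v x ∂μ| ≤
      M * (⨍ x in s, |v x - ⨍ y in s, v y ∂μ| ∂μ) + √M * √(⨍ x in s, ρ x * v x ^ 2 ∂μ) := by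
  have : IsProbabilityMeasure ((μ s)⁻¹ • μ.restrict s) :=
    cond_isProbabilityMeasure_of_finite h₀ hfin
  simpa only [setAverage_eq'] using abs_integral_mul_integral_le
    (Measure.ae_smul_measure hρ _) (hρm.smul_measure _) (hv.smul_measure (ENNReal.inv_ne_top.2 h₀))
    (hρv.smul_measure (ENNReal.inv_ne_top.2 h₀))

end SetAverage

section Segment

variable {E F : Type*} [NormedAddCommGroup E] [NormedSpace ℝ E]
  [NormedAddCommGroup F] [NormedSpace ℝ F] [CompleteSpace F]

theorem enorm_sub_le_lintegral_enorm_deriv {f : ℝ → F} (hf : Differentiable ℝ f) {a b : ℝ}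
    (hab : a ≤ b) : ‖f b - f a‖ₑ ≤ ∫⁻ t in Icc a b, ‖deriv f t‖ₑ := by
  by_cases hint : IntegrableOn (deriv f) (Icc a b)
  · rw [← intervalIntegral.integral_eq_sub_of_hasDerivAt (fun t _ => (hf t).hasDerivAt)
      ((intervalIntegrable_iff_integrableOn_Icc_of_le hab).2 hint),
      intervalIntegral.integral_of_le hab, restrict_Ioc_eq_restrict_Icc]
    exact enorm_integral_le_lintegral_enorm _
  · have : ∫⁻ t in Icc a b, ‖deriv f t‖ₑ = ∞ := by
      simpa [IntegrableOn, Integrable, HasFiniteIntegral, aestronglyMeasurable_deriv] using hint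
    simp [this]

theorem enorm_sub_le_mul_lintegral_enorm_fderiv_segment {v : E → F} (hv : Differentiable ℝ v)
    (x y : E) :
    ‖v x - v y‖ₑ ≤ ‖x - y‖ₑ * ∫⁻ t in Icc (0 : ℝ) 1, ‖fderiv ℝ v ((1 - t) • y + t • x)‖ₑ := by
  have hγ : ∀ t : ℝ, (1 - t) • y + t • x = y + t • (x - y) := fun t => by module
  have hderiv : ∀ t : ℝ, HasDerivAt (fun t : ℝ => v (y + t • (x - y)))
      (fderiv ℝ v (y + t • (x - y)) (x - y)) t := fun t =>
    (hv _).hasFDerivAt.comp_hasDerivAt t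
      (by simpa using ((hasDerivAt_id t).smul_const (x - y)).const_add y)
  simp only [hγ]
  calc ‖v x - v y‖ₑ ≤ ∫⁻ t in Icc (0 : ℝ) 1, ‖fderiv ℝ v (y + t • (x - y)) (x - y)‖ₑ := by
        simpa [(hderiv _).deriv] using
          enorm_sub_le_lintegral_enorm_deriv (fun t => (hderiv t).differentiableAt) zero_le_one
    _ ≤ ∫⁻ t in Icc (0 : ℝ) 1, ‖x - y‖ₑ * ‖fderiv ℝ v (y + t • (x - y))‖ₑ :=
        lintegral_mono fun t => (ContinuousLinearMap.le_opENorm _ _).trans_eq (mul_comm _ _)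
    _ = _ := lintegral_const_mul' _ _ enorm_ne_top

theorem Convex.enorm_sub_le_ediam_mul_lintegral_indicator {s : Set E} (hs : Convex ℝ s)
    {v : E → F} (hv : Differentiable ℝ v) {x y : E} (hx : x ∈ s) (hy : y ∈ s) :
    ‖v x - v y‖ₑ ≤ ediam s *
      ∫⁻ t in Icc (0 : ℝ) 1, s.indicator (fun z => ‖fderiv ℝ v z‖ₑ) ((1 - t) • y + t • x) := by
  refine (enorm_sub_le_mul_lintegral_enorm_fderiv_segment hv x y).trans (mul_le_mul' ?_ ?_)
  · rw [← edist_eq_enorm_sub]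
    exact edist_le_ediam_of_mem hx hy
  · refine (setLIntegral_congr_fun (measurableSet_Icc (a := (0 : ℝ)) (b := 1)) fun t ht => ?_).le
    have hmem : (1 - t) • y + t • x ∈ s := hs hy hx (by linarith [ht.2]) ht.1 (by ring)
    rw [indicator_of_mem hmem]

end Segment

section Haar

variable {E : Type*} [NormedAddCommGroup E] [NormedSpace ℝ E] [FiniteDimensional ℝ E]
  [MeasurableSpace E] [BorelSpace E] {μ : Measure E} [μ.IsAddHaarMeasure]

theorem lintegral_comp_smul_add {G : E → ℝ≥0∞} (hG : Measurable G) {a : ℝ} (ha : a ≠ 0)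
    (w : E) : ∫⁻ y, G (a • y + w) ∂μ = ENNReal.ofReal |(a ^ finrank ℝ E)⁻¹| * ∫⁻ z, G z ∂μ := by
  calc ∫⁻ y, G (a • y + w) ∂μ = ∫⁻ z, G (z + w) ∂μ.map (a • ·) :=
        (lintegral_map (hG.comp (measurable_add_const w)) (measurable_const_smul a)).symm
    _ = ENNReal.ofReal |(a ^ finrank ℝ E)⁻¹| * ∫⁻ z, G (z + w) ∂μ := by
        rw [Measure.map_addHaar_smul μ ha, lintegral_smul_measure, smul_eq_mul]
    _ = _ := by rw [lintegral_add_right_eq_self G w]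

theorem setLIntegral_comp_smul_add_le {G : E → ℝ≥0∞} (hG : Measurable G) {a : ℝ}
    (ha : 1 / 2 ≤ a) (w : E) (s : Set E) :
    ∫⁻ y in s, G (a • y + w) ∂μ ≤ 2 ^ finrank ℝ E * ∫⁻ z, G z ∂μ := by
  have ha₀ : 0 < a := by linarith
  calc ∫⁻ y in s, G (a • y + w) ∂μ ≤ ∫⁻ y, G (a • y + w) ∂μ := setLIntegral_le_lintegral _ _
    _ = ENNReal.ofReal |(a ^ finrank ℝ E)⁻¹| * ∫⁻ z, G z ∂μ :=
        lintegral_comp_smul_add hG ha₀.ne' w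
    _ ≤ 2 ^ finrank ℝ E * ∫⁻ z, G z ∂μ := by
        gcongr
        rw [abs_of_pos (by positivity), ← inv_pow, ENNReal.ofReal_pow (by positivity),
          ENNReal.ofReal_inv_of_pos ha₀]
        gcongr
        rw [ENNReal.inv_le_iff_inv_le]
        simpa [one_div, ENNReal.ofReal_inv_of_pos] using ENNReal.ofReal_le_ofReal ha

theorem lintegral_lintegral_comp_convexCombination_le {G : E → ℝ≥0∞} (hG : Measurable G)
    (t : ℝ) (s : Set E) :
    ∫⁻ x in s, ∫⁻ y in s, G ((1 - t) • y + t • x) ∂μ ∂μ ≤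
      2 ^ finrank ℝ E * μ s * ∫⁻ z, G z ∂μ := by
  have inner_le : ∀ a b : ℝ, 1 / 2 ≤ a →
      ∫⁻ x in s, ∫⁻ y in s, G (a • y + b • x) ∂μ ∂μ ≤ 2 ^ finrank ℝ E * μ s * ∫⁻ z, G z ∂μ :=
    fun a b ha => calc
      _ ≤ ∫⁻ _ in s, 2 ^ finrank ℝ E * ∫⁻ z, G z ∂μ ∂μ :=
        lintegral_mono fun x => setLIntegral_comp_smul_add_le hG ha _ s
      _ = _ := by rw [setLIntegral_const]; ring
  rcases le_total t (1 / 2) with h | h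
  · exact inner_le _ _ (by linarith)
  · rw [lintegral_lintegral_swap (f := fun x y => G ((1 - t) • y + t • x))
      (hG.comp (by fun_prop : Measurable fun p : E × E => (1 - t) • p.2 + t • p.1)).aemeasurable]
    simpa only [add_comm] using inner_le t (1 - t) h

variable {F : Type*} [NormedAddCommGroup F] [NormedSpace ℝ F] [CompleteSpace F]

theorem lintegral_lintegral_enorm_sub_le {s : Set E} (hs : Convex ℝ s) (hsm : MeasurableSet s)
    {v : E → F} (hv : Differentiable ℝ v) :
    ∫⁻ x in s, ∫⁻ y in s, ‖v x - v y‖ₑ ∂μ ∂μ ≤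
      2 ^ finrank ℝ E * ediam s * μ s * ∫⁻ z in s, ‖fderiv ℝ v z‖ₑ ∂μ := by
  set G : E → ℝ≥0∞ := s.indicator fun z => ‖fderiv ℝ v z‖ₑ
  have hG : Measurable G := (measurable_fderiv ℝ v).enorm.indicator hsm
  set H : E → E → ℝ → ℝ≥0∞ := fun x y t => G ((1 - t) • y + t • x)
  have hH : Measurable fun p : (E × E) × ℝ => H p.1.1 p.1.2 p.2 := hG.comp (by fun_prop)
  have hHt : Measurable fun q : E × E => ∫⁻ t in Icc (0 : ℝ) 1, H q.1 q.2 t :=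
    hH.lintegral_prod_right'
  calc ∫⁻ x in s, ∫⁻ y in s, ‖v x - v y‖ₑ ∂μ ∂μ
      ≤ ∫⁻ x in s, ∫⁻ y in s, ediam s * (∫⁻ t in Icc (0 : ℝ) 1, H x y t) ∂μ ∂μ :=
        setLIntegral_mono' hsm fun x hx => setLIntegral_mono' hsm fun y hy =>
          hs.enorm_sub_le_ediam_mul_lintegral_indicator hv hx hy
    _ = ediam s * ∫⁻ x in s, ∫⁻ y in s, (∫⁻ t in Icc (0 : ℝ) 1, H x y t) ∂μ ∂μ := by
        rw [← lintegral_const_mul _ hHt.lintegral_prod_right']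
        exact lintegral_congr fun x => lintegral_const_mul _ (hHt.comp measurable_prodMk_left)
    _ = ediam s * ∫⁻ x in s, (∫⁻ t in Icc (0 : ℝ) 1, ∫⁻ y in s, H x y t ∂μ) ∂μ := by
        congr 1
        refine lintegral_congr fun x => lintegral_lintegral_swap ?_
        exact (hH.comp (by fun_prop : Measurable fun p : E × ℝ => ((x, p.1), p.2))).aemeasurable
    _ = ediam s * ∫⁻ t in Icc (0 : ℝ) 1, ∫⁻ x in s, ∫⁻ y in s, H x y t ∂μ ∂μ := by
        congr 1
        refine lintegral_lintegral_swap (Measurable.aemeasurable ?_)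
        exact (hH.comp (by fun_prop : Measurable fun p : (E × ℝ) × E => ((p.1.1, p.2), p.1.2))
          ).lintegral_prod_right'
    _ ≤ ediam s * ∫⁻ t in Icc (0 : ℝ) 1, 2 ^ finrank ℝ E * μ s * ∫⁻ z, G z ∂μ := by
        gcongr with t
        exact lintegral_lintegral_comp_convexCombination_le hG t s
    _ = _ := by
        rw [setLIntegral_const, Real.volume_Icc, lintegral_indicator hsm]
        simp only [sub_zero, ENNReal.ofReal_one, mul_one]
        ring

theorem lintegral_enorm_sub_setAverage_le {s : Set E} (hs : Convex ℝ s) (hsm : MeasurableSet s)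
    (hsb : Bornology.IsBounded s) {v : E → F} (hv : Differentiable ℝ v)
    (hvi : IntegrableOn v s μ) :
    ∫⁻ x in s, ‖v x - ⨍ y in s, v y ∂μ‖ₑ ∂μ ≤
      2 ^ finrank ℝ E * ediam s * ∫⁻ x in s, ‖fderiv ℝ v x‖ₑ ∂μ := by
  rcases eq_or_ne (μ s) 0 with h₀ | h₀
  · simp [Measure.restrict_eq_zero.2 h₀]
  have hfin : μ s ≠ ∞ := hsb.measure_lt_top.ne
  have := cond_isProbabilityMeasure_of_finite h₀ hfin
  have hpoint : ∀ x, ‖v x - ⨍ y in s, v y ∂μ‖ₑ ≤ (μ s)⁻¹ * ∫⁻ y in s, ‖v x - v y‖ₑ ∂μ := by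
    intro x
    have hvP : Integrable v μ[|s] := hvi.smul_measure (ENNReal.inv_ne_top.2 h₀)
    calc ‖v x - ⨍ y in s, v y ∂μ‖ₑ = ‖∫ y, (v x - v y) ∂μ[|s]‖ₑ := by
          rw [integral_sub (integrable_const _) hvP, integral_const, probReal_univ, one_smul,
            setAverage_eq']
          rfl
      _ ≤ ∫⁻ y, ‖v x - v y‖ₑ ∂μ[|s] := enorm_integral_le_lintegral_enorm _
      _ = (μ s)⁻¹ * ∫⁻ y in s, ‖v x - v y‖ₑ ∂μ := by
          rw [ProbabilityTheory.cond, lintegral_smul_measure, smul_eq_mul]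
  calc ∫⁻ x in s, ‖v x - ⨍ y in s, v y ∂μ‖ₑ ∂μ
      ≤ ∫⁻ x in s, (μ s)⁻¹ * ∫⁻ y in s, ‖v x - v y‖ₑ ∂μ ∂μ := lintegral_mono hpoint
    _ = (μ s)⁻¹ * ∫⁻ x in s, ∫⁻ y in s, ‖v x - v y‖ₑ ∂μ ∂μ :=
        lintegral_const_mul' _ _ (ENNReal.inv_ne_top.2 h₀)
    _ ≤ (μ s)⁻¹ * (2 ^ finrank ℝ E * ediam s * μ s * ∫⁻ x in s, ‖fderiv ℝ v x‖ₑ ∂μ) := by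
        gcongr
        exact lintegral_lintegral_enorm_sub_le hs hsm hv
    _ = ((μ s)⁻¹ * μ s) * (2 ^ finrank ℝ E * ediam s * ∫⁻ x in s, ‖fderiv ℝ v x‖ₑ ∂μ) := by
        ring
    _ = 2 ^ finrank ℝ E * ediam s * ∫⁻ x in s, ‖fderiv ℝ v x‖ₑ ∂μ := by
        rw [ENNReal.inv_mul_cancel h₀ hfin, one_mul]

theorem setAverage_norm_sub_setAverage_le {s : Set E} (hs : Convex ℝ s) (hsm : MeasurableSet s)
    (hsb : Bornology.IsBounded s) {v : E → F} (hv : Differentiable ℝ v)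
    (hvi : IntegrableOn v s μ) (hDv : IntegrableOn (fun x => ‖fderiv ℝ v x‖) s μ) :
    ⨍ x in s, ‖v x - ⨍ y in s, v y ∂μ‖ ∂μ ≤
      2 ^ finrank ℝ E * diam s * ⨍ x in s, ‖fderiv ℝ v x‖ ∂μ := by
  rw [setAverage_eq μ (fun x => ‖v x - ⨍ y in s, v y ∂μ‖),
    setAverage_eq μ (fun x => ‖fderiv ℝ v x‖), smul_eq_mul, smul_eq_mul, mul_left_comm]
  gcongr
  rw [integral_norm_eq_lintegral_enorm (f := fun x => v x - ⨍ y in s, v y ∂μ)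
      (hvi.1.sub aestronglyMeasurable_const),
    integral_eq_lintegral_of_nonneg_ae (ae_of_all _ fun _ => norm_nonneg _) hDv.1]
  simp only [ofReal_norm]
  have hI : ∫⁻ x in s, ‖fderiv ℝ v x‖ₑ ∂μ ≠ ∞ := by
    simpa [HasFiniteIntegral] using hDv.2.ne
  rw [diam, ← ENNReal.toReal_ofNat, ← ENNReal.toReal_pow, ← ENNReal.toReal_mul,
    ← ENNReal.toReal_mul]
  exact ENNReal.toReal_mono (by finiteness [hsb.ediam_ne_top, hI])
    (lintegral_enorm_sub_setAverage_le hs hsm hsb hv hvi)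

end Haar

theorem Continuous.integrableOn_ball {X E : Type*} [MetricSpace X] [ProperSpace X]
    [MeasurableSpace X] [OpensMeasurableSpace X] {μ : Measure X} [IsFiniteMeasureOnCompacts μ]
    [NormedAddCommGroup E] {f : X → E} (hf : Continuous f) (c : X) (r : ℝ) :
    IntegrableOn f (ball c r) μ :=
  (hf.continuousOn.integrableOn_compact (isCompact_closedBall c r)).mono_set
    ball_subset_closedBall

section Disc

variable {N : ℝ} (c : EuclideanSpace ℝ (Fin 2))

theorem sqrt_setAverage_ball_le (hN : 0 < N) (f : EuclideanSpace ℝ (Fin 2) → ℝ) :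
    √(⨍ x in ball c N, f x) ≤ N⁻¹ * √(∫ x in ball c N, f x) := by
  rw [setAverage_eq, smul_eq_mul, measureReal_def, EuclideanSpace.volume_ball_fin_two,
    ← ENNReal.ofReal_pow hN.le, ← ENNReal.ofReal_mul (by positivity),
    ENNReal.toReal_ofReal (by positivity), Real.sqrt_mul (by positivity), Real.sqrt_inv,
    Real.sqrt_mul (by positivity), Real.sqrt_sq hN.le, mul_inv]
  have hπ : 1 ≤ √Real.pi := Real.one_le_sqrt.2 (by linarith [Real.pi_gt_three])
  gcongr
  exact mul_le_of_le_one_right (inv_nonneg.2 hN.le) (inv_le_one_of_one_le₀ hπ)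

theorem setAverage_abs_sub_setAverage_ball_le (hN : 0 < N) {v : EuclideanSpace ℝ (Fin 2) → ℝ}
    (hv : Differentiable ℝ v)
    (hgrad : IntegrableOn (fun x => ‖fderiv ℝ v x‖ ^ 2) (ball c N)) :
    ⨍ x in ball c N, |v x - ⨍ y in ball c N, v y| ≤
      8 * √(∫ x in ball c N, ‖fderiv ℝ v x‖ ^ 2) := by
  have hB₀ : volume (ball c N) ≠ 0 := (measure_ball_pos volume c hN).ne'
  have : IsFiniteMeasure (volume.restrict (ball c N)) :=
    isFiniteMeasure_restrict.2 measure_ball_lt_top.ne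
  have hDm : AEStronglyMeasurable (fun x => ‖fderiv ℝ v x‖) (volume.restrict (ball c N)) :=
    (measurable_fderiv ℝ v).norm.aestronglyMeasurable
  have hDv : IntegrableOn (fun x => ‖fderiv ℝ v x‖) (ball c N) :=
    ((memLp_two_iff_integrable_sq hDm).2 hgrad).integrable one_le_two
  have hDv_avg : 0 ≤ ⨍ x in ball c N, ‖fderiv ℝ v x‖ := by rw [setAverage_eq]; positivity
  calc ⨍ x in ball c N, |v x - ⨍ y in ball c N, v y|
      ≤ 2 ^ 2 * diam (ball c N) * ⨍ x in ball c N, ‖fderiv ℝ v x‖ := by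
        simpa only [Real.norm_eq_abs, finrank_euclideanSpace_fin] using
          setAverage_norm_sub_setAverage_le (convex_ball c N) measurableSet_ball isBounded_ball
            hv (hv.continuous.integrableOn_ball c N) hDv
    _ ≤ 2 ^ 2 * (2 * N) * (N⁻¹ * √(∫ x in ball c N, ‖fderiv ℝ v x‖ ^ 2)) := by
        gcongr
        · exact diam_ball hN.le
        · exact (setAverage_le_sqrt_setAverage_sq hB₀ measure_ball_lt_top.ne hDm hgrad).trans
            (sqrt_setAverage_ball_le c hN _)
    _ = 8 * √(∫ x in ball c N, ‖fderiv ℝ v x‖ ^ 2) := by field_simp; ring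

end Disc

theorem average_product_estimate_general (N M₁ : ℝ) (hN : 1 ≤ N)
    (ρ v : EuclideanSpace ℝ (Fin 2) → ℝ)
    (hρ : ∀ x, 0 ≤ ρ x ∧ ρ x ≤ M₁)
    (hv : Differentiable ℝ v)
    (hgrad : IntegrableOn (fun x => ‖fderiv ℝ v x‖ ^ 2)
      (Metric.ball (0 : EuclideanSpace ℝ (Fin 2)) N) volume) :
    |(⨍ x in Metric.ball (0 : EuclideanSpace ℝ (Fin 2)) N, ρ x) *
        (⨍ x in Metric.ball (0 : EuclideanSpace ℝ (Fin 2)) N, v x)| ≤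
      8 * M₁ * Real.sqrt (∫ x in Metric.ball (0 : EuclideanSpace ℝ (Fin 2)) N, ‖fderiv ℝ v x‖ ^ 2) +
        Real.sqrt M₁ * N⁻¹ *
          Real.sqrt (∫ x in Metric.ball (0 : EuclideanSpace ℝ (Fin 2)) N, ρ x * (v x) ^ 2) := by
  set B := ball (0 : EuclideanSpace ℝ (Fin 2)) N
  have hN₀ : 0 < N := by linarith
  have hM₁ : 0 ≤ M₁ := (hρ 0).1.trans (hρ 0).2
  by_cases hρm : AEStronglyMeasurable ρ (volume.restrict B)
  swap
  -- `ρ` is then not integrable on `B`, so its average is the junk value `0`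
  · rw [setAverage_eq, integral_undef fun h => hρm h.1, smul_zero, zero_mul, abs_zero]
    positivity
  have hρv2 : IntegrableOn (fun x => ρ x * v x ^ 2) B :=
    ((hv.continuous.pow 2).integrableOn_ball 0 N).bdd_mul hρm
      (ae_of_all _ fun x => (Real.norm_of_nonneg (hρ x).1).trans_le (hρ x).2)
  calc _ ≤ M₁ * (⨍ x in B, |v x - ⨍ y in B, v y|) + √M₁ * √(⨍ x in B, ρ x * v x ^ 2) :=
        abs_setAverage_mul_setAverage_le (measure_ball_pos volume 0 hN₀).ne'
          measure_ball_lt_top.ne (ae_of_all _ hρ) hρm (hv.continuous.integrableOn_ball 0 N) hρv2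
    _ ≤ M₁ * (8 * √(∫ x in B, ‖fderiv ℝ v x‖ ^ 2)) +
          √M₁ * (N⁻¹ * √(∫ x in B, ρ x * v x ^ 2)) := by
        gcongr
        · exact setAverage_abs_sub_setAverage_ball_le 0 hN₀ hv hgrad
        · exact sqrt_setAverage_ball_le 0 hN₀ _
    _ = _ := by ring

/-- Estimate of the product of averages over a ball B_N in ℝ². -/
theorem average_product_estimate (N M₁ M₂ : ℝ) (hN : 1 ≤ N) (hM₁ : 0 < M₁) (hM₂ : 0 < M₂)
    (ρ v : EuclideanSpace ℝ (Fin 2) → ℝ)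
    (hρ : ∀ x, 0 ≤ ρ x ∧ ρ x ≤ M₁)
    (hmass : M₂ ≤ ∫ x in Metric.ball (0 : EuclideanSpace ℝ (Fin 2)) N, ρ x)
    (hv : Differentiable ℝ v)
    (hvL2 : IntegrableOn (fun x => (v x) ^ 2) (Metric.ball (0 : EuclideanSpace ℝ (Fin 2)) N) volume)
    (hgrad : IntegrableOn (fun x => ‖fderiv ℝ v x‖ ^ 2)
      (Metric.ball (0 : EuclideanSpace ℝ (Fin 2)) N) volume) :
    |(⨍ x in Metric.ball (0 : EuclideanSpace ℝ (Fin 2)) N, ρ x) *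
        (⨍ x in Metric.ball (0 : EuclideanSpace ℝ (Fin 2)) N, v x)| ≤
      8 * M₁ * Real.sqrt (∫ x in Metric.ball (0 : EuclideanSpace ℝ (Fin 2)) N, ‖fderiv ℝ v x‖ ^ 2) +
        Real.sqrt M₁ * N⁻¹ *
          Real.sqrt (∫ x in Metric.ball (0 : EuclideanSpace ℝ (Fin 2)) N, ρ x * (v x) ^ 2) :=
  average_product_estimate_general N M₁ hN ρ v hρ hv hgrad
end

section
/- Let T > 0, let y, b ∈ W^{1,1}(0,T) and g ∈ C(ℝ) satisfy y'(t) = g(y(t)) + b'(t) a.e. on [0,T] with y(0) = y⁰. Assume g(s) → −∞ as s → ∞, and that there exist N₀ ≥ 0, N₁ ≥ 0 with b(t₂) − b(t₁) ≤ N₀ + N₁(t₂ − t₁) for all 0 ≤ t₁ < t₂ ≤ T. Let ζ̄ be such that g(ζ) ≤ −N₁ for all ζ ≥ ζ̄. Then y(t) ≤ max{y⁰, ζ̄} + N₀ for all t ∈ [0,T]. -/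
/-!
If `y t > max (y 0) ζ + N₀`, let `t₁` be the last time before `t` at which `y ≤ max (y 0) ζ`.
On `(t₁, t]` the solution stays above `ζ`, so the drift `g (y s)` is at most `-N₁` there and
exactly cancels the linear part of the bound on `b t - b t₁`; hence `y t - y t₁ ≤ N₀`,
a contradiction.
-/

open Set MeasureTheory

theorem ContinuousOn.exists_last_le_of_lt {y : ℝ → ℝ} {a t M : ℝ} (hat : a ≤ t)
    (hy : ContinuousOn y (Icc a t)) (hya : y a ≤ M) (hyt : M < y t) :
    ∃ t₁ ∈ Ico a t, y t₁ ≤ M ∧ ∀ s ∈ Ioc t₁ t, M < y s := by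
  set S := Icc a t ∩ y ⁻¹' Iic M
  have hS_closed : IsClosed S := hy.preimage_isClosed_of_isClosed isClosed_Icc isClosed_Iic
  have hS_bdd : BddAbove S := ⟨t, fun s hs => hs.1.2⟩
  have hS_ne : S.Nonempty := ⟨a, ⟨le_rfl, hat⟩, hya⟩
  obtain ⟨ht₁_mem, hyt₁ : y (sSup S) ≤ M⟩ := hS_closed.csSup_mem hS_ne hS_bdd
  have ht₁_lt : sSup S < t := ht₁_mem.2.lt_of_ne (ne_of_apply_ne y (hyt₁.trans_lt hyt).ne)
  refine ⟨sSup S, ⟨ht₁_mem.1, ht₁_lt⟩, hyt₁, fun s hs => ?_⟩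
  by_contra! hys
  have hsS : s ∈ S := ⟨⟨ht₁_mem.1.trans hs.1.le, hs.2⟩, hys⟩
  exact (le_csSup hS_bdd hsS).not_gt hs.1

theorem intervalIntegral.integral_le_mul_sub_of_forall_Ioo_le {f : ℝ → ℝ} {a b c : ℝ}
    (hab : a ≤ b) (hf : IntervalIntegrable f volume a b) (hfc : ∀ x ∈ Ioo a b, f x ≤ c) :
    ∫ x in a..b, f x ≤ c * (b - a) := by
  calc ∫ x in a..b, f x ≤ ∫ _ in a..b, c :=
        integral_mono_on_of_le_Ioo hab hf intervalIntegrable_const hfc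
    _ = c * (b - a) := by rw [integral_const, smul_eq_mul, mul_comm]

theorem zlotnik_inequality_general (T : ℝ) (y b g : ℝ → ℝ)
    (hg : Continuous g)
    (hy : ContinuousOn y (Icc 0 T))
    (heq : ∀ t₁ t₂, 0 ≤ t₁ → t₁ ≤ t₂ → t₂ ≤ T →
      y t₂ - y t₁ = (∫ s in t₁..t₂, g (y s)) + (b t₂ - b t₁))
    (N₀ N₁ : ℝ) (hN₀ : 0 ≤ N₀)
    (hbinc : ∀ t₁ t₂, 0 ≤ t₁ → t₁ < t₂ → t₂ ≤ T → b t₂ - b t₁ ≤ N₀ + N₁ * (t₂ - t₁))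
    (ζ : ℝ) (hζ : ∀ z, ζ ≤ z → g z ≤ -N₁) :
    ∀ t ∈ Icc (0 : ℝ) T, y t ≤ max (y 0) ζ + N₀ := by
  intro t ⟨ht0, htT⟩
  by_contra! hyt
  obtain ⟨t₁, ⟨ht₁0, ht₁_lt⟩, hyt₁, hy_above⟩ :=
    (hy.mono (Icc_subset_Icc_right htT)).exists_last_le_of_lt ht0 (le_max_left (y 0) ζ)
      (by linarith)
  have hdrift : ∫ s in t₁..t, g (y s) ≤ -N₁ * (t - t₁) := by
    refine intervalIntegral.integral_le_mul_sub_of_forall_Ioo_le ht₁_lt.le ?_ fun s hs =>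
      hζ _ ((le_max_right _ _).trans (hy_above s (Ioo_subset_Ioc_self hs)).le)
    refine (hg.comp_continuousOn (hy.mono ?_)).intervalIntegrable
    rw [uIcc_of_le ht₁_lt.le]
    exact Icc_subset_Icc ht₁0 htT
  have hforcing := hbinc t₁ t ht₁0 ht₁_lt htT
  have hincrement := heq t₁ t ht₁0 ht₁_lt.le htT
  linarith

/-- Zlotnik's inequality. -/
theorem zlotnik_inequality (T : ℝ) (hT : 0 < T) (y b g : ℝ → ℝ)
    (hg : Continuous g)
    (hy : ContinuousOn y (Icc 0 T)) (hb : ContinuousOn b (Icc 0 T))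
    (heq : ∀ t₁ t₂, 0 ≤ t₁ → t₁ ≤ t₂ → t₂ ≤ T →
      y t₂ - y t₁ = (∫ s in t₁..t₂, g (y s)) + (b t₂ - b t₁))
    (hglim : Filter.Tendsto g Filter.atTop Filter.atBot)
    (N₀ N₁ : ℝ) (hN₀ : 0 ≤ N₀) (hN₁ : 0 ≤ N₁)
    (hbinc : ∀ t₁ t₂, 0 ≤ t₁ → t₁ < t₂ → t₂ ≤ T → b t₂ - b t₁ ≤ N₀ + N₁ * (t₂ - t₁))
    (ζ : ℝ) (hζ : ∀ z, ζ ≤ z → g z ≤ -N₁) :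
    ∀ t ∈ Icc (0 : ℝ) T, y t ≤ max (y 0) ζ + N₀ :=
  zlotnik_inequality_general T y b g hg hy heq N₀ N₁ hN₀ hbinc ζ hζ
end
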